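/- No finite graph with exactly two branch points, each of degree at least 4, is 7-arc connected. -/

import Mathlib

open Set Topology

/-- The points `0` and `1` of the unit interval `[0,1]`. -/
def i0 : Set.Icc (0:ℝ) 1 := ⟨0, by norm_num⟩
def i1 : Set.Icc (0:ℝ) 1 := ⟨1, by norm_num⟩

/-- A subset `A` of a topological space `X` is an *arc* if, with the subspace
topology, it is homeomorphic to the closed unit interval `[0,1]`. -/
def IsArc {X : Type*} [TopologicalSpace X] (A : Set X) : Prop :=
  Nonempty (A ≃ₜ Set.Icc (0:ℝ) 1)

/-- `X` is `n`-arc connected if any `n` points of `X` lie on a common arc. -/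
def NArcConnected (X : Type*) [TopologicalSpace X] (n : ℕ) : Prop :=
  ∀ p : Fin n → X, ∃ A : Set X, IsArc A ∧ ∀ i, p i ∈ A

open Classical
/-- A (connected, compact Hausdorff) topological finite graph structure on `X`:
finitely many arcs (edges), given as embeddings of `[0,1]`, covering `X`,
such that two distinct edges meet only in common endpoints. -/
structure TopGraph (X : Type*) [TopologicalSpace X] where
  n : ℕ
  edge : Fin n → Set.Icc (0:ℝ) 1 → X
  emb : ∀ i, Topology.IsEmbedding (edge i)
  cover : (⋃ i, Set.range (edge i)) = Set.univ
  meet : ∀ i j, i ≠ j → ∀ x ∈ Set.range (edge i) ∩ Set.range (edge j),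
    (x = edge i i0 ∨ x = edge i i1) ∧ (x = edge j i0 ∨ x = edge j i1)

/-- The degree (order) of a point of a finite graph: the number of edge-germs at it,
counted via incidences of edge endpoints.  (Points interior to an edge have order two;
they are never branch points.) -/
noncomputable def TopGraph.degree {X : Type*} [TopologicalSpace X] (G : TopGraph X) (x : X) : ℕ :=
  ∑ i : Fin G.n, ((if G.edge i i0 = x then 1 else 0) + (if G.edge i i1 = x then 1 else 0))

/-- A branch point of a finite graph is a point of order at least `3`. -/
def TopGraph.IsBranchPoint {X : Type*} [TopologicalSpace X] (G : TopGraph X) (x : X) : Prop :=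
  3 ≤ G.degree x

/-!
Put `B = {x, y}`. Every point off `B` has order at most two, so each component of `X \ B` is an
arc or a circle (possibly missing some end points), and at most two edge-ends at `B` belong to
it. As `x` and `y` carry at least eight edge-ends, `X \ B` has at least four components; pick the
midpoint of an edge in each of four of them. On an arc through `x`, `y` and these four points,
the points `x` and `y` cut the arc into three intervals, so two of the midpoints lie in a
connected subset of `X \ B`, which is absurd.
-/

theorem Prod.eq_mk_not_snd_of_fst_eq {α : Type*} {p q : α × Bool} (h : p.1 = q.1) (hpq : p ≠ q) :
    q = (p.1, !p.2) := by
  rcases p with ⟨_, _ | _⟩ <;> rcases q with ⟨_, _ | _⟩ <;> simp_all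

open Finset

theorem SimpleGraph.Connected.card_filter_degree_le_one_le_two {V : Type*} [Fintype V]
    {G : SimpleGraph V} [DecidableRel G.Adj] (hG : G.Connected) (hdeg : ∀ v, G.degree v ≤ 2) :
    #{v | G.degree v ≤ 1} ≤ 2 := by
  have hcard := hG.card_vert_le_card_edgeSet_add_one
  rw [Nat.card_eq_fintype_card, Nat.card_eq_fintype_card, ← SimpleGraph.edgeFinset_card] at hcard
  have hsum := G.sum_degrees_eq_twice_card_edges
  have hle : ∑ v, (G.degree v + if G.degree v ≤ 1 then 1 else 0) ≤ ∑ _v : V, 2 :=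
    sum_le_sum fun v _ => by have := hdeg v; split_ifs <;> omega
  rw [sum_add_distrib, ← card_filter, sum_const, card_univ, smul_eq_mul] at hle
  omega

theorem SimpleGraph.card_filter_degree_le_one_le_two_mul_card_connectedComponent {V : Type*}
    [Fintype V] {G : SimpleGraph V} [DecidableRel G.Adj] (hdeg : ∀ v, G.degree v ≤ 2) :
    #{v | G.degree v ≤ 1} ≤ 2 * Nat.card G.ConnectedComponent := by
  rw [Nat.card_eq_fintype_card,
    card_eq_sum_card_fiberwise (f := G.connectedComponentMk) (t := univ) (by simp),
    ← card_univ, mul_comm, ← smul_eq_mul, ← sum_const]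
  refine sum_le_sum fun C _ => ?_
  have hdegC (w : C.supp) : (G.induce C.supp).degree w = G.degree w :=
    G.degree_induce_of_neighborSet_subset fun _ hu => (C.mem_supp_congr_adj hu).mp w.2
  calc #{v ∈ {v | G.degree v ≤ 1} | G.connectedComponentMk v = C}
      = #(({w : C.supp | (G.induce C.supp).degree w ≤ 1} : Finset C.supp).map
          (Function.Embedding.subtype _)) := by
        congr 1
        ext v
        simp only [mem_filter, mem_map, Function.Embedding.coe_subtype]
        constructor
        · rintro ⟨⟨-, hv⟩, hvC⟩
          exact ⟨⟨v, hvC⟩, ⟨mem_univ _, (hdegC _).trans_le hv⟩, rfl⟩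
        · rintro ⟨w, ⟨-, hw⟩, rfl⟩
          exact ⟨⟨mem_univ _, (hdegC w).symm.trans_le hw⟩, w.2⟩
    _ ≤ 2 := by
        have hC : (G.induce C.supp).Connected := C.connected_toSimpleGraph
        rw [card_map]
        exact hC.card_filter_degree_le_one_le_two fun w => (hdegC w).trans_le (hdeg w)

theorem Finset.exists_ne_forall_notMem_Icc {α ι : Type*} [LinearOrder α] [Fintype ι]
    (s : Finset α) (u : ι → α) (hcard : #s + 1 < Fintype.card ι) (hu : ∀ k, u k ∉ s) :
    ∃ k l, k ≠ l ∧ u k ≤ u l ∧ ∀ c ∈ s, c ∉ Set.Icc (u k) (u l) := by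
  -- pigeonhole on the number of cut points below `u k`
  set below : ι → ℕ := fun k => #{c ∈ s | c < u k}
  have key : ∀ k l, below k = below l → u k ≤ u l → ∀ c ∈ s, c ∉ Set.Icc (u k) (u l) := by
    rintro k l hkl - c hc ⟨hkc, hcl⟩
    have hkc : u k < c := hkc.lt_of_ne fun h => hu k (h ▸ hc)
    have hcl : c < u l := hcl.lt_of_ne fun h => hu l (h ▸ hc)
    refine hkl.not_lt (card_lt_card ⟨?_, fun h => ?_⟩)
    · exact monotone_filter_right s fun d _ hd => hd.trans (hkc.trans hcl)
    · exact (mem_filter.mp (h (mem_filter.mpr ⟨hc, hcl⟩))).2.asymm hkc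
  obtain ⟨k, -, l, -, hkl, hbelow⟩ := exists_ne_map_eq_of_card_lt_of_maps_to
    (s := univ) (t := range (#s + 1)) (by simpa using hcard)
    (f := below) fun k _ => mem_range.mpr (Nat.lt_succ_of_le (card_filter_le _ _))
  rcases le_total (u k) (u l) with h | h
  · exact ⟨k, l, hkl, h, key k l hbelow h⟩
  · exact ⟨l, k, hkl.symm, h, key l k hbelow.symm h⟩

theorem IsArc.exists_isPreconnected_mem_mem {X ι : Type*} [TopologicalSpace X] [Fintype ι]
    {A : Set X} (hA : IsArc A) (s : Finset X) (m : ι → X) (hmA : ∀ k, m k ∈ A)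
    (hms : ∀ k, m k ∉ s) (hcard : #s + 1 < Fintype.card ι) :
    ∃ k l, k ≠ l ∧ ∃ S : Set X, IsPreconnected S ∧ m k ∈ S ∧ m l ∈ S ∧ ∀ z ∈ S, z ∉ s := by
  obtain ⟨e⟩ := hA
  set cuts : Finset (Set.Icc (0:ℝ) 1) := (s.subtype (· ∈ A)).image e
  have hcuts : #cuts + 1 < Fintype.card ι := by
    have : #cuts ≤ #s := (card_image_le.trans_eq (card_subtype _ _)).trans (card_filter_le _ _)
    omega
  obtain ⟨k, l, hkl, hle, hfree⟩ := exists_ne_forall_notMem_Icc cuts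
    (fun k => e ⟨m k, hmA k⟩) hcuts fun k hk => by
      obtain ⟨z, hz, hze⟩ := mem_image.mp hk
      have hzs := mem_subtype.mp hz
      rw [e.injective hze] at hzs
      exact hms k hzs
  refine ⟨k, l, hkl, (fun t => (e.symm t : X)) '' Set.Icc (e ⟨m k, hmA k⟩) (e ⟨m l, hmA l⟩),
    isPreconnected_Icc.image _ (continuous_subtype_val.comp e.symm.continuous).continuousOn,
    ⟨_, Set.left_mem_Icc.mpr hle, by simp⟩, ⟨_, Set.right_mem_Icc.mpr hle, by simp⟩, ?_⟩
  rintro _ ⟨t, ht, rfl⟩ hts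
  exact hfree t (mem_image.mpr ⟨e.symm t, mem_subtype.mpr hts, by simp⟩) ht

namespace TopGraph

variable {X : Type*} [TopologicalSpace X] (G : TopGraph X)

def endpoint (p : Fin G.n × Bool) : X := G.edge p.1 (if p.2 then i1 else i0)

theorem degree_eq_card_endpoint (v : X) : G.degree v = #{p | G.endpoint p = v} := by
  rw [card_filter, ← univ_product_univ, sum_product]
  refine sum_congr rfl fun i _ => ?_
  simp [endpoint, add_comm]

theorem exists_endpoint_eq_of_mem_range_inter {i j : Fin G.n} (hij : i ≠ j) {z : X}
    (hz : z ∈ Set.range (G.edge i) ∩ Set.range (G.edge j)) :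
    ∃ b c, G.endpoint (i, b) = z ∧ G.endpoint (j, c) = z := by
  obtain ⟨hi, hj⟩ := G.meet i j hij z hz
  refine ⟨decide (z ≠ G.edge i i0), decide (z ≠ G.edge j i0), ?_, ?_⟩ <;>
    grind [endpoint]

theorem edge_ne_endpoint {t : Set.Icc (0:ℝ) 1} (ht0 : t ≠ i0) (ht1 : t ≠ i1) (i : Fin G.n)
    (p : Fin G.n × Bool) : G.edge i t ≠ G.endpoint p := by
  intro h
  have hend : G.edge i t = G.edge i i0 ∨ G.edge i t = G.edge i i1 := by
    by_cases hi : p.1 = i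
    · rcases p with ⟨_, _ | _⟩ <;> simp_all [endpoint]
    · exact (G.meet p.1 i hi _ ⟨⟨_, rfl⟩, t, h⟩).2.imp h.trans h.trans
  rcases hend with h' | h'
  exacts [ht0 ((G.emb i).injective h'), ht1 ((G.emb i).injective h')]

theorem degree_edge_eq_zero {t : Set.Icc (0:ℝ) 1} (ht0 : t ≠ i0) (ht1 : t ≠ i1) (i : Fin G.n) :
    G.degree (G.edge i t) = 0 := by
  rw [degree_eq_card_endpoint, card_eq_zero, filter_eq_empty_iff]
  exact fun p _ h => G.edge_ne_endpoint ht0 ht1 i p h.symm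

/-- Two ends are joined when they are the two ends of one edge or meet at a point outside `B`;
the components of this graph are the components of `X \ B`. -/
def endGraph (B : Set X) : SimpleGraph (Fin G.n × Bool) where
  Adj p q := p ≠ q ∧ (p.1 = q.1 ∨ G.endpoint p = G.endpoint q ∧ G.endpoint p ∉ B)
  symm := ⟨fun _ _ ⟨hne, h⟩ => ⟨hne.symm, h.imp Eq.symm fun ⟨he, hB⟩ => ⟨he.symm, he ▸ hB⟩⟩⟩
  loopless := ⟨fun _ h => h.1 rfl⟩

variable {G} {B : Set X}

theorem endGraph_adj {p q : Fin G.n × Bool} : (G.endGraph B).Adj p q ↔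
    p ≠ q ∧ (p.1 = q.1 ∨ G.endpoint p = G.endpoint q ∧ G.endpoint p ∉ B) :=
  Iff.rfl

theorem endGraph_reachable_of_fst_eq {p q : Fin G.n × Bool} (h : p.1 = q.1) :
    (G.endGraph B).Reachable p q := by
  by_cases hpq : p = q
  · exact hpq ▸ .refl p
  · exact SimpleGraph.Adj.reachable (endGraph_adj.mpr ⟨hpq, .inl h⟩)

theorem endGraph_degree_le_one {p : Fin G.n × Bool} (hp : G.endpoint p ∈ B) :
    (G.endGraph B).degree p ≤ 1 := by
  rw [← SimpleGraph.card_neighborFinset_eq_degree, ← Finset.card_singleton (p.1, !p.2)]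
  refine card_le_card fun q hq => ?_
  obtain ⟨hpq, h | ⟨-, hB⟩⟩ := endGraph_adj.mp ((G.endGraph B).mem_neighborFinset p q |>.mp hq)
  exacts [mem_singleton.mpr (Prod.eq_mk_not_snd_of_fst_eq h hpq), absurd hp hB]

theorem endGraph_degree_le_degree (p : Fin G.n × Bool) :
    (G.endGraph B).degree p ≤ G.degree (G.endpoint p) := by
  have hp : p ∈ ({q | G.endpoint q = G.endpoint p} : Finset _) := by simp
  rw [← SimpleGraph.card_neighborFinset_eq_degree, degree_eq_card_endpoint,
    ← card_erase_add_one hp]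
  refine (card_le_card (t := insert (p.1, !p.2) (erase _ p)) fun q hq => ?_).trans
    (card_insert_le _ _)
  obtain ⟨hpq, h | ⟨h, -⟩⟩ := endGraph_adj.mp ((G.endGraph B).mem_neighborFinset p q |>.mp hq)
  · exact mem_insert.mpr (.inl (Prod.eq_mk_not_snd_of_fst_eq h hpq))
  · exact mem_insert_of_mem (mem_erase.mpr ⟨hpq.symm, by simp [h]⟩)

theorem card_filter_endpoint_mem_le [DecidablePred (· ∈ B)] (hB : ∀ v ∉ B, G.degree v ≤ 2) :
    #{p | G.endpoint p ∈ B} ≤ 2 * Nat.card (G.endGraph B).ConnectedComponent := by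
  have hdeg (p : Fin G.n × Bool) : (G.endGraph B).degree p ≤ 2 := by
    by_cases hp : G.endpoint p ∈ B
    · exact (endGraph_degree_le_one hp).trans one_le_two
    · exact (endGraph_degree_le_degree p).trans (hB _ hp)
  have hsub : #{p | G.endpoint p ∈ B} ≤ #{p | (G.endGraph B).degree p ≤ 1} :=
    Finset.card_le_card (monotone_filter_right _ fun p _ hp => endGraph_degree_le_one hp)
  exact hsub.trans (SimpleGraph.card_filter_degree_le_one_le_two_mul_card_connectedComponent hdeg)

theorem card_filter_endpoint_mem_pair {x y : X} (hxy : x ≠ y) :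
    #{p | G.endpoint p ∈ ({x, y} : Set X)} = G.degree x + G.degree y := by
  rw [G.degree_eq_card_endpoint, G.degree_eq_card_endpoint, ← card_union_of_disjoint
    (disjoint_filter.mpr fun p _ hx hy => hxy (hx.symm.trans hy)), ← filter_or]
  simp [eq_comm]

/-- The edges reachable from `p` and the others form two closed sets covering `S`; a common
point of them inside `S` would be a shared endpoint outside `B`, i.e. an edge of `endGraph`. -/
theorem endGraph_reachable_of_isPreconnected [T2Space X] {S : Set X} (hS : IsPreconnected S)
    (hSB : ∀ z ∈ S, z ∉ B) {p q : Fin G.n × Bool} (hp : (S ∩ Set.range (G.edge p.1)).Nonempty)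
    (hq : (S ∩ Set.range (G.edge q.1)).Nonempty) : (G.endGraph B).Reachable p q := by
  by_contra hpq
  set R : Fin G.n → Prop := fun i => (G.endGraph B).Reachable p (i, false)
  have hclosed (I : Set (Fin G.n)) : IsClosed (⋃ i ∈ I, Set.range (G.edge i)) :=
    I.toFinite.isClosed_biUnion fun i _ => (isCompact_range (G.emb i).continuous).isClosed
  have hcover : S ⊆ (⋃ i ∈ {i | R i}, Set.range (G.edge i)) ∪
      ⋃ i ∈ {i | ¬ R i}, Set.range (G.edge i) := fun z _ => by
    obtain ⟨i, hi⟩ := Set.mem_iUnion.mp (G.cover ▸ Set.mem_univ z)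
    by_cases h : R i
    exacts [.inl (Set.mem_biUnion h hi), .inr (Set.mem_biUnion h hi)]
  obtain ⟨z, hzS, hzU, hzW⟩ := isPreconnected_closed_iff.mp hS _ _ (hclosed _) (hclosed _) hcover
    (hp.mono (Set.inter_subset_inter_right _
      (Set.subset_biUnion_of_mem (u := fun i => Set.range (G.edge i))
        (endGraph_reachable_of_fst_eq rfl : R p.1))))
    (hq.mono (Set.inter_subset_inter_right _
      (Set.subset_biUnion_of_mem (u := fun i => Set.range (G.edge i))
        (fun h => hpq (h.trans (endGraph_reachable_of_fst_eq rfl)) : ¬ R q.1))))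
  obtain ⟨i, hi, hzi⟩ := Set.mem_iUnion₂.mp hzU
  obtain ⟨j, hj, hzj⟩ := Set.mem_iUnion₂.mp hzW
  have hij : i ≠ j := fun h => hj (h ▸ hi)
  obtain ⟨b, c, hb, hc⟩ := G.exists_endpoint_eq_of_mem_range_inter hij ⟨hzi, hzj⟩
  have hadj : (G.endGraph B).Adj (i, b) (j, c) :=
    endGraph_adj.mpr ⟨fun h => hij (congrArg Prod.fst h), .inr ⟨hb.trans hc.symm, hb ▸ hSB z hzS⟩⟩
  have hib : (G.endGraph B).Reachable (i, false) (i, b) := endGraph_reachable_of_fst_eq rfl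
  have hjc : (G.endGraph B).Reachable (j, c) (j, false) := endGraph_reachable_of_fst_eq rfl
  exact hj ((show R i from hi).trans (hib.trans (hadj.reachable.trans hjc)))

end TopGraph

theorem two_branch_points_degree_four_not_seven_ac_general {X : Type*} [TopologicalSpace X]
    [T2Space X] (G : TopGraph X) (x y : X) (hxy : x ≠ y)
    (hset : {z : X | G.IsBranchPoint z} = {x, y})
    (hdx : 4 ≤ G.degree x) (hdy : 4 ≤ G.degree y) :
    ¬ NArcConnected X 7 := by
  intro hAC
  have hB : ∀ v ∉ ({x, y} : Set X), G.degree v ≤ 2 := fun v hv => by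
    have hv' : ¬ G.IsBranchPoint v := by rwa [← hset] at hv
    exact Nat.le_of_lt_succ (not_le.mp hv')
  have hcomp := G.card_filter_endpoint_mem_pair hxy ▸ G.card_filter_endpoint_mem_le hB
  obtain ⟨f⟩ := Function.Embedding.nonempty_of_card_le
    (α := Fin 4) (β := (G.endGraph {x, y}).ConnectedComponent)
    (by rw [Fintype.card_fin, ← Nat.card_eq_fintype_card]; omega)
  choose p hp using fun k => (f k).exists_rep
  set half : Set.Icc (0:ℝ) 1 := ⟨1 / 2, by norm_num⟩
  set m : Fin 4 → X := fun k => G.edge (p k).1 half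
  have hm : ∀ k, m k ∉ ({x, y} : Finset X) := by
    intro k hk
    have h0 : G.degree (m k) = 0 := G.degree_edge_eq_zero
      (by simp [half, i0, Subtype.ext_iff]) (by norm_num [half, i1, Subtype.ext_iff]) _
    rw [Finset.mem_insert, Finset.mem_singleton] at hk
    rcases hk with h | h <;> rw [h] at h0 <;> omega
  -- six points already suffice; `x` is listed twice
  obtain ⟨A, hA, hmem⟩ := hAC ![x, y, m 0, m 1, m 2, m 3, x]
  obtain ⟨k, l, hkl, S, hS, hkS, hlS, hSB⟩ := hA.exists_isPreconnected_mem_mem {x, y} m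
    (fun k => by fin_cases k; exacts [hmem 2, hmem 3, hmem 4, hmem 5]) hm
    (by have := card_le_two (a := x) (b := y); simp only [Fintype.card_fin]; omega)
  have hpq := G.endGraph_reachable_of_isPreconnected (B := {x, y}) hS
    (fun z hz => by simpa using hSB z hz) ⟨m k, hkS, half, rfl⟩ ⟨m l, hlS, half, rfl⟩
  exact hkl (f.injective (by rw [← hp, ← hp]; exact SimpleGraph.ConnectedComponent.sound hpq))

/-- No finite graph with exactly two branch points, each of degree at least `4`,
is `7`-arc connected. -/
theorem two_branch_points_degree_four_not_seven_ac {X : Type*} [TopologicalSpace X]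
    [T2Space X] [ConnectedSpace X] (G : TopGraph X) (x y : X) (hxy : x ≠ y)
    (hset : {z : X | G.IsBranchPoint z} = {x, y})
    (hdx : 4 ≤ G.degree x) (hdy : 4 ≤ G.degree y) :
    ¬ NArcConnected X 7 :=
  two_branch_points_degree_four_not_seven_ac_general G x y hxy hset hdx hdy
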